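/- Fix L > 0. The function ω(k) = L² / (16·K(k)²·(1−k²)) is differentiable on (0,1) with derivative ω'(k) = L²·(K(k) − E(k)) / (8·k·(1−k²)²·K(k)³), and ω'(k) > 0 for every k ∈ (0,1); in particular k ↦ ω(k) is strictly increasing on (0,1). -/

import Mathlib

/-!
Write `Δ(θ) = √(1 - k² sin² θ)`. Differentiating under the integral sign gives
`K'(k) = k ∫ sin² θ / Δ³`, and since `k² sin θ cos θ / Δ` vanishes at `0` and `π/2` while its
derivative is `Δ - (1 - k²) / Δ - k² (1 - k²) sin² θ / Δ³`, this integral turns into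
Legendre's formula `K' = (E - (1 - k²) K) / (k (1 - k²))`. The quotient rule then yields
`ω' = L² (K - E) / (8 k (1 - k²)² K³)`, and `E < K` because `Δ ≤ 1 / Δ` everywhere,
strictly at `θ = π/2` when `k ≠ 0`.
-/

open Real

/-- Complete elliptic integral of the first kind. -/
noncomputable def ellipticK (k : ℝ) : ℝ :=
  ∫ θ in (0:ℝ)..(π/2), 1 / Real.sqrt (1 - k^2 * Real.sin θ^2)

/-- Complete elliptic integral of the second kind. -/
noncomputable def ellipticE (k : ℝ) : ℝ :=
  ∫ θ in (0:ℝ)..(π/2), Real.sqrt (1 - k^2 * Real.sin θ^2)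

open MeasureTheory intervalIntegral Metric Set

lemma one_sub_sq_le_one_sub_sq_mul_sin_sq {x r : ℝ} (hx : |x| ≤ r) (θ : ℝ) :
    1 - r^2 ≤ 1 - x^2 * sin θ^2 := by
  have hxr : x^2 ≤ r^2 := sq_le_sq' (abs_le.1 hx).1 (abs_le.1 hx).2
  nlinarith [sin_sq_le_one θ, sq_nonneg x, sq_nonneg (sin θ)]

lemma one_sub_sq_mul_sin_sq_pos {k : ℝ} (hk : |k| < 1) (θ : ℝ) :
    0 < 1 - k^2 * sin θ^2 := by
  have h := one_sub_sq_le_one_sub_sq_mul_sin_sq le_rfl (x := k) θ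
  nlinarith [abs_nonneg k]

lemma hasDerivAt_one_div_sqrt_one_sub_sq_mul {x s : ℝ} (hx : 0 < 1 - x^2 * s) :
    HasDerivAt (fun y => 1 / sqrt (1 - y^2 * s)) (x * (s / sqrt (1 - x^2 * s)^3)) x := by
  have hu : HasDerivAt (fun y => 1 - y^2 * s) (-(2 * x * s)) x := by
    simpa using ((hasDerivAt_pow 2 x).mul_const s).const_sub 1
  have hΔ : sqrt (1 - x^2 * s) ≠ 0 := (sqrt_pos.2 hx).ne'
  simp only [one_div]
  refine ((hu.sqrt hx.ne').inv hΔ).congr_deriv ?_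
  field_simp

lemma continuous_sqrt_one_sub_sq_mul_sin_sq (k : ℝ) :
    Continuous fun θ => sqrt (1 - k^2 * sin θ^2) := by
  fun_prop

section

variable {k : ℝ}

lemma continuous_one_div_sqrt_one_sub_sq_mul_sin_sq (hk : |k| < 1) :
    Continuous fun θ => 1 / sqrt (1 - k^2 * sin θ^2) := by
  fun_prop (disch := exact fun θ => (sqrt_pos.2 (one_sub_sq_mul_sin_sq_pos hk θ)).ne')

lemma continuous_sin_sq_div_sqrt_one_sub_sq_mul_sin_sq_pow_three (hk : |k| < 1) :
    Continuous fun θ => sin θ^2 / sqrt (1 - k^2 * sin θ^2)^3 := by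
  fun_prop (disch :=
    exact fun θ => pow_ne_zero 3 (sqrt_pos.2 (one_sub_sq_mul_sin_sq_pos hk θ)).ne')

lemma hasDerivAt_ellipticK_integral (hk : |k| < 1) :
    HasDerivAt ellipticK
      (k * ∫ θ in (0:ℝ)..(π/2), sin θ^2 / sqrt (1 - k^2 * sin θ^2)^3) k := by
  set r := (1 + |k|) / 2 with hr_def
  have hr1 : r < 1 := by linarith
  have hr : 0 < 1 - r^2 := by nlinarith [abs_nonneg k]
  have hball : ∀ x ∈ ball k ((1 - |k|) / 2), |x| ≤ r := fun x hx => by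
    have := abs_sub_abs_le_abs_sub x k
    rw [mem_ball, dist_eq] at hx
    linarith
  have hpos : ∀ x ∈ ball k ((1 - |k|) / 2), ∀ θ, 0 < 1 - x^2 * sin θ^2 := fun x hx θ =>
    hr.trans_le (one_sub_sq_le_one_sub_sq_mul_sin_sq (hball x hx) θ)
  have hbound : ∀ x ∈ ball k ((1 - |k|) / 2), ∀ θ,
      ‖x * (sin θ^2 / sqrt (1 - x^2 * sin θ^2)^3)‖ ≤ 1 / sqrt (1 - r^2)^3 := by
    intro x hx θ
    have hx1 : |x| ≤ 1 := (hball x hx).trans hr1.le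
    have hΔ : sqrt (1 - r^2) ≤ sqrt (1 - x^2 * sin θ^2) :=
      sqrt_le_sqrt (one_sub_sq_le_one_sub_sq_mul_sin_sq (hball x hx) θ)
    rw [norm_mul, Real.norm_eq_abs, Real.norm_of_nonneg (by positivity)]
    calc |x| * (sin θ^2 / sqrt (1 - x^2 * sin θ^2)^3) ≤ 1 * (1 / sqrt (1 - r^2)^3) := by
          gcongr
          · exact sin_sq_le_one θ
      _ = 1 / sqrt (1 - r^2)^3 := one_mul _
  have hε : 0 < (1 - |k|) / 2 := by linarith
  have := hasDerivAt_integral_of_dominated_loc_of_deriv_le (μ := volume) (a := 0) (b := π/2)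
    (F' := fun x θ => x * (sin θ^2 / sqrt (1 - x^2 * sin θ^2)^3))
    (ball_mem_nhds k hε) ?_
    ((continuous_one_div_sqrt_one_sub_sq_mul_sin_sq hk).intervalIntegrable _ _)
    (continuous_const.mul
      (continuous_sin_sq_div_sqrt_one_sub_sq_mul_sin_sq_pow_three hk)).aestronglyMeasurable
    (ae_of_all _ fun θ _ x hx => hbound x hx θ) intervalIntegrable_const
    (ae_of_all _ fun θ _ x hx => hasDerivAt_one_div_sqrt_one_sub_sq_mul (hpos x hx θ))
  · rw [← intervalIntegral.integral_const_mul]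
    exact this.2
  · filter_upwards [ball_mem_nhds k hε] with x hx
    exact (continuous_one_div_sqrt_one_sub_sq_mul_sin_sq
      ((hball x hx).trans_lt hr1)).aestronglyMeasurable

lemma ellipticK_pos (hk : |k| < 1) : 0 < ellipticK k :=
  intervalIntegral_pos_of_pos_on
    ((continuous_one_div_sqrt_one_sub_sq_mul_sin_sq hk).intervalIntegrable _ _)
    (fun θ _ => one_div_pos.2 (sqrt_pos.2 (one_sub_sq_mul_sin_sq_pos hk θ))) (by positivity)

lemma sqrt_le_one_div_sqrt_iff {u : ℝ} (hu : 0 < u) : sqrt u ≤ 1 / sqrt u ↔ u ≤ 1 := by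
  rw [le_div_iff₀ (sqrt_pos.2 hu), mul_self_sqrt hu.le]

lemma sqrt_lt_one_div_sqrt_iff {u : ℝ} (hu : 0 < u) : sqrt u < 1 / sqrt u ↔ u < 1 := by
  rw [lt_div_iff₀ (sqrt_pos.2 hu), mul_self_sqrt hu.le]

lemma ellipticE_lt_ellipticK (hk0 : k ≠ 0) (hk : |k| < 1) : ellipticE k < ellipticK k := by
  apply integral_lt_integral_of_continuousOn_of_le_of_exists_lt (by positivity)
    (continuous_sqrt_one_sub_sq_mul_sin_sq k).continuousOn
    (continuous_one_div_sqrt_one_sub_sq_mul_sin_sq hk).continuousOn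
  · intro θ _
    rw [sqrt_le_one_div_sqrt_iff (one_sub_sq_mul_sin_sq_pos hk θ)]
    nlinarith [sq_nonneg k, sq_nonneg (sin θ)]
  · refine ⟨π/2, right_mem_Icc.2 (by positivity), ?_⟩
    rw [sqrt_lt_one_div_sqrt_iff (one_sub_sq_mul_sin_sq_pos hk _), sin_pi_div_two]
    nlinarith [sq_pos_of_ne_zero hk0]

lemma hasDerivAt_sq_mul_sin_mul_cos_div_sqrt (hk : |k| < 1) (θ : ℝ) :
    HasDerivAt (fun θ => k^2 * (sin θ * cos θ) / sqrt (1 - k^2 * sin θ^2))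
      (sqrt (1 - k^2 * sin θ^2) - (1 - k^2) * (1 / sqrt (1 - k^2 * sin θ^2))
        - k^2 * (1 - k^2) * (sin θ^2 / sqrt (1 - k^2 * sin θ^2)^3)) θ := by
  have hu := one_sub_sq_mul_sin_sq_pos hk θ
  have hΔ : sqrt (1 - k^2 * sin θ^2) ≠ 0 := (sqrt_pos.2 hu).ne'
  have hsq : sqrt (1 - k^2 * sin θ^2)^2 = 1 - k^2 * sin θ^2 := sq_sqrt hu.le
  have hdu : HasDerivAt (fun θ => 1 - k^2 * sin θ^2) (-(k^2 * (2 * sin θ * cos θ))) θ := by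
    simpa using (((hasDerivAt_sin θ).pow 2).const_mul (k^2)).const_sub 1
  refine ((((hasDerivAt_sin θ).mul (hasDerivAt_cos θ)).const_mul (k^2)).div
    (hdu.sqrt hu.ne') hΔ).congr_deriv ?_
  field_simp
  rw [Pi.mul_apply, hsq]
  linear_combination k^2 * sin_sq_add_cos_sq θ

lemma ellipticE_sub_one_sub_sq_mul_ellipticK (hk : |k| < 1) :
    ellipticE k - (1 - k^2) * ellipticK k
      = k^2 * (1 - k^2) * ∫ θ in (0:ℝ)..(π/2), sin θ^2 / sqrt (1 - k^2 * sin θ^2)^3 := by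
  have hE := (continuous_sqrt_one_sub_sq_mul_sin_sq k).intervalIntegrable (μ := volume) 0 (π/2)
  have hK :=
    (continuous_one_div_sqrt_one_sub_sq_mul_sin_sq hk).intervalIntegrable (μ := volume) 0 (π/2)
  have hJ := (continuous_sin_sq_div_sqrt_one_sub_sq_mul_sin_sq_pow_three hk).intervalIntegrable
    (μ := volume) 0 (π/2)
  have hFTC := integral_eq_sub_of_hasDerivAt
    (fun θ _ => hasDerivAt_sq_mul_sin_mul_cos_div_sqrt hk θ)
    ((hE.sub (hK.const_mul _)).sub (hJ.const_mul _))
  rw [integral_sub (hE.sub (hK.const_mul _)) (hJ.const_mul _), integral_sub hE (hK.const_mul _),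
    intervalIntegral.integral_const_mul, intervalIntegral.integral_const_mul] at hFTC
  simp only [sin_zero, cos_pi_div_two, mul_zero, zero_mul, zero_div, sub_zero] at hFTC
  unfold ellipticE ellipticK
  linarith

lemma hasDerivAt_ellipticK (hk0 : k ≠ 0) (hk : |k| < 1) :
    HasDerivAt ellipticK ((ellipticE k - (1 - k^2) * ellipticK k) / (k * (1 - k^2))) k := by
  have h1k : 0 < 1 - k^2 := sub_pos.2 ((sq_lt_one_iff_abs_lt_one k).2 hk)
  refine (hasDerivAt_ellipticK_integral hk).congr_deriv ?_
  rw [ellipticE_sub_one_sub_sq_mul_ellipticK hk]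
  field_simp

lemma hasDerivAt_sq_div_ellipticK_sq_mul_one_sub_sq (L : ℝ) (hk0 : k ≠ 0) (hk : |k| < 1) :
    HasDerivAt (fun k' => L^2 / (16 * ellipticK k'^2 * (1 - k'^2)))
      (L^2 * (ellipticK k - ellipticE k) / (8 * k * (1 - k^2)^2 * ellipticK k^3)) k := by
  have hK := ellipticK_pos hk
  have h1k : 0 < 1 - k^2 := sub_pos.2 ((sq_lt_one_iff_abs_lt_one k).2 hk)
  have hdenom := (((hasDerivAt_ellipticK hk0 hk).pow 2).const_mul 16).mul
    ((hasDerivAt_pow 2 k).const_sub 1)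
  refine ((hasDerivAt_const k (L^2)).div hdenom
    (by simp only [Pi.mul_apply, Pi.pow_apply]; positivity)).congr_deriv ?_
  simp only [Pi.mul_apply, Pi.pow_apply]
  field_simp
  ring

end

theorem omega_of_k_strictMono (L : ℝ) (hL : 0 < L) :
    (∀ k ∈ Set.Ioo (0:ℝ) 1,
      HasDerivAt (fun k' : ℝ => L^2 / (16 * ellipticK k'^2 * (1 - k'^2)))
        (L^2 * (ellipticK k - ellipticE k) / (8 * k * (1 - k^2)^2 * ellipticK k^3)) k ∧
      0 < L^2 * (ellipticK k - ellipticE k) / (8 * k * (1 - k^2)^2 * ellipticK k^3)) ∧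
    StrictMonoOn (fun k : ℝ => L^2 / (16 * ellipticK k^2 * (1 - k^2)))
      (Set.Ioo (0:ℝ) 1) := by
  have hderiv : ∀ k ∈ Set.Ioo (0:ℝ) 1,
      HasDerivAt (fun k' : ℝ => L^2 / (16 * ellipticK k'^2 * (1 - k'^2)))
        (L^2 * (ellipticK k - ellipticE k) / (8 * k * (1 - k^2)^2 * ellipticK k^3)) k ∧
      0 < L^2 * (ellipticK k - ellipticE k) / (8 * k * (1 - k^2)^2 * ellipticK k^3) := by
    rintro k ⟨hk0, hk1⟩
    have hk : |k| < 1 := by rwa [abs_of_pos hk0]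
    have hK := ellipticK_pos hk
    have h1k : 0 < 1 - k^2 := sub_pos.2 ((sq_lt_one_iff_abs_lt_one k).2 hk)
    have hEK := sub_pos.2 (ellipticE_lt_ellipticK hk0.ne' hk)
    exact ⟨hasDerivAt_sq_div_ellipticK_sq_mul_one_sub_sq L hk0.ne' hk, by positivity⟩
  refine ⟨hderiv, strictMonoOn_of_deriv_pos (convex_Ioo 0 1)
    (fun k hk => (hderiv k hk).1.continuousAt.continuousWithinAt) fun k hk => ?_⟩
  rw [interior_Ioo] at hk
  rw [(hderiv k hk).1.deriv]
  exact (hderiv k hk).2
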